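/- For every quantum channel N from a d_A-dimensional system A (with d_A ≥ 2) to a d_B-dimensional system B, the minimum distinguishability preservation is bounded from below by the minimum causal effect as DP_min(N) ≥ 2·CE_min(N) − 1. -/

import Mathlib

/-!
Write `X = p • ρ - (1 - p) • ρ'` through its Jordan decomposition `X = a • σ - b • σ'`, with
orthogonal density matrices `σ`, `σ'`, so that `‖X‖₁ = a + b` and `‖σ - σ'‖₁ = 2`; hence
`‖N σ - N σ'‖₁ ≥ 2 CEmin N`. If `b ≤ a`, the triangle inequality applied to
`a • (N σ - N σ') = N X + (b - a) • N σ'` gives `‖N X‖₁ ≥ 2a CEmin N - (a - b)`, which is at least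
`(2 CEmin N - 1)(a + b)` because a channel does not increase the trace norm, so `CEmin N ≤ 1`.
-/

open Matrix ComplexOrder

/-- Trace norm of a square complex matrix. -/
noncomputable def traceNorm {n : Type*} [Fintype n] [DecidableEq n]
    (X : Matrix n n ℂ) : ℝ :=
  (((Matrix.posSemidef_conjTranspose_mul_self X).1.eigenvectorUnitary : Matrix n n ℂ) *
      Matrix.diagonal (((↑) : ℝ → ℂ) ∘ (√·) ∘ (Matrix.posSemidef_conjTranspose_mul_self X).1.eigenvalues) *
      (star (Matrix.posSemidef_conjTranspose_mul_self X).1.eigenvectorUnitary : Matrix n n ℂ)).trace.re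

/-- A density matrix: positive semidefinite with unit trace. -/
def IsDensityMatrix {n : Type*} [Fintype n] [DecidableEq n] (ρ : Matrix n n ℂ) : Prop :=
  ρ.PosSemidef ∧ ρ.trace = 1

/-- A quantum channel: a linear map admitting a Kraus representation. -/
def IsQuantumChannel {dA dB : ℕ}
    (N : Matrix (Fin dA) (Fin dA) ℂ →ₗ[ℂ] Matrix (Fin dB) (Fin dB) ℂ) : Prop :=
  ∃ (k : ℕ) (K : Fin k → Matrix (Fin dB) (Fin dA) ℂ),
    (∀ X, N X = ∑ i, K i * X * (K i)ᴴ) ∧ (∑ i, (K i)ᴴ * K i = 1)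

/-- Maximum causal effect. -/
noncomputable def CEmax {dA dB : ℕ}
    (N : Matrix (Fin dA) (Fin dA) ℂ →ₗ[ℂ] Matrix (Fin dB) (Fin dB) ℂ) : ℝ :=
  sSup {x : ℝ | ∃ ρ ρ' : Matrix (Fin dA) (Fin dA) ℂ,
    IsDensityMatrix ρ ∧ IsDensityMatrix ρ' ∧ ρ ≠ ρ' ∧
    x = traceNorm (N ρ - N ρ') / traceNorm (ρ - ρ')}

/-- Minimum causal effect. -/
noncomputable def CEmin {dA dB : ℕ}
    (N : Matrix (Fin dA) (Fin dA) ℂ →ₗ[ℂ] Matrix (Fin dB) (Fin dB) ℂ) : ℝ :=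
  sInf {x : ℝ | ∃ ρ ρ' : Matrix (Fin dA) (Fin dA) ℂ,
    IsDensityMatrix ρ ∧ IsDensityMatrix ρ' ∧ ρ ≠ ρ' ∧
    x = traceNorm (N ρ - N ρ') / traceNorm (ρ - ρ')}

/-- Minimum distinguishability preservation. -/
noncomputable def DPmin {dA dB : ℕ}
    (N : Matrix (Fin dA) (Fin dA) ℂ →ₗ[ℂ] Matrix (Fin dB) (Fin dB) ℂ) : ℝ :=
  sInf {x : ℝ | ∃ p : ℝ, 0 ≤ p ∧ p ≤ 1 ∧
    ∃ ρ ρ' : Matrix (Fin dA) (Fin dA) ℂ,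
      IsDensityMatrix ρ ∧ IsDensityMatrix ρ' ∧ ρ ≠ ρ' ∧
      x = traceNorm ((p : ℂ) • N ρ - ((1 - p : ℝ) : ℂ) • N ρ') /
          traceNorm ((p : ℂ) • ρ - ((1 - p : ℝ) : ℂ) • ρ')}

section TraceNorm

open scoped MatrixOrder

variable {n : Type*} [Fintype n]

lemma Matrix.PosSemidef.re_trace_nonneg {P : Matrix n n ℂ} (hP : P.PosSemidef) : 0 ≤ P.trace.re :=
  (Complex.le_def.mp hP.trace_nonneg).1

lemma Matrix.PosSemidef.eq_zero_of_re_trace_eq_zero {P : Matrix n n ℂ} (hP : P.PosSemidef)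
    (h : P.trace.re = 0) : P = 0 :=
  hP.trace_eq_zero_iff.mp (Complex.ext h (Complex.le_def.mp hP.trace_nonneg).2.symm)

variable [DecidableEq n]

lemma traceNorm_eq_re_trace_abs (X : Matrix n n ℂ) : traceNorm X = (CFC.abs X).trace.re := by
  have h0 : (0 : Matrix n n ℂ) ≤ Xᴴ * X :=
    nonneg_iff_posSemidef.mpr (posSemidef_conjTranspose_mul_self X)
  rw [CFC.abs, star_eq_conjTranspose, CFC.sqrt_eq_real_sqrt _ h0, cfcₙ_eq_cfc,
    (posSemidef_conjTranspose_mul_self X).1.cfc_eq]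
  rfl

lemma traceNorm_nonneg (X : Matrix n n ℂ) : 0 ≤ traceNorm X := by
  rw [traceNorm_eq_re_trace_abs]
  exact (nonneg_iff_posSemidef.mp (CFC.abs_nonneg X)).re_trace_nonneg

lemma traceNorm_pos {X : Matrix n n ℂ} (hX : X ≠ 0) : 0 < traceNorm X := by
  refine (traceNorm_nonneg X).lt_of_ne fun h ↦ hX ?_
  rw [traceNorm_eq_re_trace_abs] at h
  have habs := (nonneg_iff_posSemidef.mp (CFC.abs_nonneg X)).eq_zero_of_re_trace_eq_zero h.symm
  have hsq := CFC.abs_sq X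
  rw [habs, sq, zero_mul, star_eq_conjTranspose] at hsq
  exact conjTranspose_mul_self_eq_zero.mp hsq.symm

lemma traceNorm_neg (X : Matrix n n ℂ) : traceNorm (-X) = traceNorm X := by
  simp only [traceNorm_eq_re_trace_abs, CFC.abs_neg]

lemma traceNorm_smul (r : ℂ) (X : Matrix n n ℂ) : traceNorm (r • X) = ‖r‖ * traceNorm X := by
  simp only [traceNorm_eq_re_trace_abs, CFC.abs_smul, trace_smul, Complex.real_smul,
    Complex.re_ofReal_mul]

lemma Matrix.PosSemidef.traceNorm_eq {P : Matrix n n ℂ} (hP : P.PosSemidef) :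
    traceNorm P = P.trace.re := by
  rw [traceNorm_eq_re_trace_abs, CFC.abs_of_nonneg P (nonneg_iff_posSemidef.mpr hP)]

lemma Matrix.IsHermitian.traceNorm_eq {X : Matrix n n ℂ} (hX : X.IsHermitian) :
    traceNorm X = X⁺.trace.re + X⁻.trace.re := by
  rw [traceNorm_eq_re_trace_abs, ← CFC.posPart_add_negPart X hX.isSelfAdjoint, trace_add,
    Complex.add_re]

lemma Matrix.posSemidef_posPart (X : Matrix n n ℂ) : X⁺.PosSemidef :=
  nonneg_iff_posSemidef.mp (CFC.posPart_nonneg X)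

lemma Matrix.posSemidef_negPart (X : Matrix n n ℂ) : X⁻.PosSemidef :=
  nonneg_iff_posSemidef.mp (CFC.negPart_nonneg X)

lemma traceNorm_sub_of_mul_eq_zero {P Q : Matrix n n ℂ} (hP : P.PosSemidef) (hQ : Q.PosSemidef)
    (hPQ : P * Q = 0) : traceNorm (P - Q) = P.trace.re + Q.trace.re := by
  obtain ⟨hpos, hneg⟩ := CFC.posPart_negPart_unique rfl hPQ
    (nonneg_iff_posSemidef.mpr hP) (nonneg_iff_posSemidef.mpr hQ)
  rw [IsHermitian.traceNorm_eq (hP.1.sub hQ.1), hpos, hneg]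

lemma Matrix.IsHermitian.traceNorm_eq_sum_abs_eigenvalues {X : Matrix n n ℂ}
    (hX : X.IsHermitian) : traceNorm X = ∑ i, |hX.eigenvalues i| := by
  rw [traceNorm_eq_re_trace_abs, CFC.abs_eq_cfc_norm X hX.isSelfAdjoint, hX.cfc_eq,
    IsHermitian.cfc, Unitary.conjStarAlgAut_apply, trace_mul_cycle, Unitary.coe_star_mul_self,
    one_mul, trace_diagonal, Complex.re_sum]
  simp

lemma traceNorm_sub_le {P Q : Matrix n n ℂ} (hP : P.PosSemidef) (hQ : Q.PosSemidef) :
    traceNorm (P - Q) ≤ P.trace.re + Q.trace.re := by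
  have hX : (P - Q).IsHermitian := hP.1.sub hQ.1
  set U := hX.eigenvectorUnitary
  -- In the eigenbasis of `P - Q` its eigenvalues are differences of diagonal entries of `P`, `Q`.
  have hP' := hP.conjTranspose_mul_mul_same (U : Matrix n n ℂ)
  have hQ' := hQ.conjTranspose_mul_mul_same (U : Matrix n n ℂ)
  have heig : ∀ i, hX.eigenvalues i =
      (((U : Matrix n n ℂ)ᴴ * P * U) i i).re - (((U : Matrix n n ℂ)ᴴ * Q * U) i i).re := by
    intro i
    have h := congrFun (congrFun hX.conjStarAlgAut_star_eigenvectorUnitary i) i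
    rw [Unitary.conjStarAlgAut_star_apply, star_eq_conjTranspose, Matrix.mul_sub,
      Matrix.sub_mul, Matrix.sub_apply, diagonal_apply_eq] at h
    simpa using (congrArg Complex.re h).symm
  have htrace : ∀ M : Matrix n n ℂ, ((U : Matrix n n ℂ)ᴴ * M * U).trace = M.trace := fun M ↦ by
    rw [trace_mul_cycle, ← star_eq_conjTranspose, ← Unitary.coe_star,
      Unitary.coe_mul_star_self, one_mul]
  rw [hX.traceNorm_eq_sum_abs_eigenvalues, ← htrace P, ← htrace Q, trace, trace, Complex.re_sum,
    Complex.re_sum, ← Finset.sum_add_distrib]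
  refine Finset.sum_le_sum fun i _ ↦ abs_le.mpr ?_
  have hp := (Complex.le_def.mp (hP'.diag_nonneg (i := i))).1
  have hq := (Complex.le_def.mp (hQ'.diag_nonneg (i := i))).1
  simp only [diag_apply, Complex.zero_re] at hp hq ⊢
  constructor <;> linarith [heig i]

lemma traceNorm_add_le {X Y : Matrix n n ℂ} (hX : X.IsHermitian) (hY : Y.IsHermitian) :
    traceNorm (X + Y) ≤ traceNorm X + traceNorm Y := by
  have hsum : X + Y = (X⁺ + Y⁺) - (X⁻ + Y⁻) := by
    conv_lhs => rw [← CFC.posPart_sub_negPart X hX.isSelfAdjoint,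
      ← CFC.posPart_sub_negPart Y hY.isSelfAdjoint]
    abel
  calc traceNorm (X + Y)
      ≤ (X⁺ + Y⁺).trace.re + (X⁻ + Y⁻).trace.re := hsum ▸ traceNorm_sub_le
        ((posSemidef_posPart X).add (posSemidef_posPart Y))
        ((posSemidef_negPart X).add (posSemidef_negPart Y))
    _ = traceNorm X + traceNorm Y := by
      rw [hX.traceNorm_eq, hY.traceNorm_eq, trace_add, trace_add, Complex.add_re, Complex.add_re]
      ring

end TraceNorm

section DensityMatrix

variable {n : Type*} [Fintype n] [DecidableEq n]

lemma IsDensityMatrix.ne_of_mul_eq_zero {σ σ' : Matrix n n ℂ} (hσ : IsDensityMatrix σ)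
    (hσσ' : σ * σ' = 0) : σ ≠ σ' := by
  rintro rfl
  have hσ0 : σ = 0 := conjTranspose_mul_self_eq_zero.mp (by rwa [hσ.1.1.eq])
  simpa [hσ0] using hσ.2

lemma IsDensityMatrix.traceNorm_sub_of_mul_eq_zero {σ σ' : Matrix n n ℂ} (hσ : IsDensityMatrix σ)
    (hσ' : IsDensityMatrix σ') (hσσ' : σ * σ' = 0) : traceNorm (σ - σ') = 2 := by
  rw [_root_.traceNorm_sub_of_mul_eq_zero hσ.1 hσ'.1 hσσ', hσ.2, hσ'.2]
  norm_num

lemma Matrix.PosSemidef.exists_isDensityMatrix_smul {P : Matrix n n ℂ} (hP : P.PosSemidef)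
    (htr : 0 < P.trace.re) : ∃ σ, IsDensityMatrix σ ∧ P = (P.trace.re : ℂ) • σ := by
  have hne : (P.trace.re : ℂ) ≠ 0 := Complex.ofReal_ne_zero.mpr htr.ne'
  refine ⟨(P.trace.re : ℂ)⁻¹ • P, ⟨hP.smul (by simpa using htr.le), ?_⟩, ?_⟩
  · rw [trace_smul, smul_eq_mul, ← Complex.re_add_im P.trace,
      (Complex.le_def.mp hP.trace_nonneg).2.symm]
    simp [hne]
  · rw [smul_smul, mul_inv_cancel₀ hne, one_smul]

lemma IsDensityMatrix.smul_sub_smul_ne_zero {ρ ρ' : Matrix n n ℂ} (hρ : IsDensityMatrix ρ)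
    (hρ' : IsDensityMatrix ρ') (hne : ρ ≠ ρ') (p : ℝ) :
    (p : ℂ) • ρ - ((1 - p : ℝ) : ℂ) • ρ' ≠ 0 := by
  intro h
  have htr := congrArg trace h
  rw [trace_sub, trace_smul, trace_smul, hρ.2, hρ'.2, trace_zero] at htr
  have hp : (p : ℂ) = 1 / 2 := by push_cast at htr; linear_combination htr / 2
  have hp' : ((1 - p : ℝ) : ℂ) = 1 / 2 := by push_cast; rw [hp]; norm_num
  rw [hp, hp', ← smul_sub, smul_eq_zero, sub_eq_zero] at h
  exact hne (h.resolve_left (by norm_num))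

lemma two_mul_sub_one_mul_le_traceNorm_smul_sub_smul {A B : Matrix n n ℂ} (hA : A.IsHermitian)
    (hB : IsDensityMatrix B) {a b c : ℝ} (hb : 0 ≤ b) (hba : b ≤ a) (hc : c ≤ 1)
    (hAB : 2 * c ≤ traceNorm (A - B)) :
    (2 * c - 1) * (a + b) ≤ traceNorm ((a : ℂ) • A - (b : ℂ) • B) := by
  have ha : 0 ≤ a := hb.trans hba
  have hX : ((a : ℂ) • A - (b : ℂ) • B).IsHermitian :=
    (hA.smul (Complex.conj_ofReal a)).sub (hB.1.1.smul (Complex.conj_ofReal b))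
  have hsplit : (a : ℂ) • A - (b : ℂ) • B + ((b - a : ℝ) : ℂ) • B = (a : ℂ) • (A - B) := by
    push_cast
    module
  have htri := traceNorm_add_le hX (hB.1.1.smul (Complex.conj_ofReal (b - a)))
  rw [hsplit, traceNorm_smul, traceNorm_smul, hB.1.traceNorm_eq, hB.2, Complex.one_re, mul_one,
    Complex.norm_real, Complex.norm_real, Real.norm_of_nonneg ha,
    Real.norm_of_nonpos (by linarith)] at htri
  nlinarith

end DensityMatrix

namespace IsQuantumChannel

variable {dA dB : ℕ} {N : Matrix (Fin dA) (Fin dA) ℂ →ₗ[ℂ] Matrix (Fin dB) (Fin dB) ℂ}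

lemma map_posSemidef (hN : IsQuantumChannel N) {P : Matrix (Fin dA) (Fin dA) ℂ}
    (hP : P.PosSemidef) : (N P).PosSemidef := by
  obtain ⟨k, K, hK, -⟩ := hN
  rw [hK]
  exact Finset.sum_induction _ _ (fun _ _ ↦ PosSemidef.add) PosSemidef.zero
    fun i _ ↦ hP.mul_mul_conjTranspose_same (K i)

lemma trace_map (hN : IsQuantumChannel N) (X : Matrix (Fin dA) (Fin dA) ℂ) :
    (N X).trace = X.trace := by
  obtain ⟨k, K, hK, hsum⟩ := hN
  simp_rw [hK, trace_sum, trace_mul_cycle _ X, ← trace_sum, ← Finset.sum_mul, hsum, one_mul]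

lemma isDensityMatrix_map (hN : IsQuantumChannel N) {ρ : Matrix (Fin dA) (Fin dA) ℂ}
    (hρ : IsDensityMatrix ρ) : IsDensityMatrix (N ρ) :=
  ⟨hN.map_posSemidef hρ.1, (hN.trace_map ρ).trans hρ.2⟩

lemma traceNorm_map_of_posSemidef (hN : IsQuantumChannel N) {P : Matrix (Fin dA) (Fin dA) ℂ}
    (hP : P.PosSemidef) : traceNorm (N P) = P.trace.re := by
  rw [(hN.map_posSemidef hP).traceNorm_eq, hN.trace_map]

lemma traceNorm_map_le (hN : IsQuantumChannel N) {X : Matrix (Fin dA) (Fin dA) ℂ}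
    (hX : X.IsHermitian) : traceNorm (N X) ≤ traceNorm X := by
  have hP := posSemidef_posPart X
  have hQ := posSemidef_negPart X
  calc traceNorm (N X) = traceNorm (N X⁺ - N X⁻) := by
        rw [← map_sub, CFC.posPart_sub_negPart X hX.isSelfAdjoint]
    _ ≤ (N X⁺).trace.re + (N X⁻).trace.re :=
        traceNorm_sub_le (hN.map_posSemidef hP) (hN.map_posSemidef hQ)
    _ = traceNorm X := by rw [hN.trace_map, hN.trace_map, hX.traceNorm_eq]

lemma two_mul_sub_one_mul_traceNorm_le (hN : IsQuantumChannel N) {c : ℝ} (hc : c ≤ 1)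
    (horth : ∀ σ σ', IsDensityMatrix σ → IsDensityMatrix σ' → σ * σ' = 0 →
      2 * c ≤ traceNorm (N σ - N σ'))
    {X : Matrix (Fin dA) (Fin dA) ℂ} (hX : X.IsHermitian) :
    (2 * c - 1) * traceNorm X ≤ traceNorm (N X) := by
  wlog hba : X⁻.trace.re ≤ X⁺.trace.re generalizing X
  · have h := this hX.neg (by rw [CFC.posPart_neg, CFC.negPart_neg]; linarith)
    rwa [map_neg, traceNorm_neg, traceNorm_neg] at h
  have hjordan := CFC.posPart_sub_negPart X hX.isSelfAdjoint
  rcases (posSemidef_negPart X).re_trace_nonneg.eq_or_lt with hb | hb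
  · have hXpos : X.PosSemidef := by
      rw [← hjordan, (posSemidef_negPart X).eq_zero_of_re_trace_eq_zero hb.symm, sub_zero]
      exact posSemidef_posPart X
    rw [hN.traceNorm_map_of_posSemidef hXpos, hXpos.traceNorm_eq]
    nlinarith [hXpos.re_trace_nonneg]
  · obtain ⟨σ, hσ, hPσ⟩ := (posSemidef_posPart X).exists_isDensityMatrix_smul (hb.trans_le hba)
    obtain ⟨σ', hσ', hQσ'⟩ := (posSemidef_negPart X).exists_isDensityMatrix_smul hb
    have hσσ' : σ * σ' = 0 := by
      have h := CFC.posPart_mul_negPart X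
      rw [hPσ, hQσ', smul_mul_smul] at h
      exact (smul_eq_zero.mp h).resolve_left (by exact_mod_cast (mul_pos (hb.trans_le hba) hb).ne')
    have hNX : N X = (X⁺.trace.re : ℂ) • N σ - (X⁻.trace.re : ℂ) • N σ' := by
      rw [← map_smul, ← map_smul, ← hPσ, ← hQσ', ← map_sub, hjordan]
    rw [hNX, hX.traceNorm_eq]
    exact two_mul_sub_one_mul_le_traceNorm_smul_sub_smul (hN.isDensityMatrix_map hσ).1.1
      (hN.isDensityMatrix_map hσ') hb.le hba hc (horth σ σ' hσ hσ' hσσ')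

end IsQuantumChannel

section CausalEffect

variable {dA dB : ℕ} {N : Matrix (Fin dA) (Fin dA) ℂ →ₗ[ℂ] Matrix (Fin dB) (Fin dB) ℂ}

lemma CEmin_le {ρ ρ' : Matrix (Fin dA) (Fin dA) ℂ} (hρ : IsDensityMatrix ρ)
    (hρ' : IsDensityMatrix ρ') (hne : ρ ≠ ρ') :
    CEmin N ≤ traceNorm (N ρ - N ρ') / traceNorm (ρ - ρ') :=
  csInf_le ⟨0, by
    rintro _ ⟨σ, σ', -, -, -, rfl⟩
    exact div_nonneg (traceNorm_nonneg _) (traceNorm_nonneg _)⟩ ⟨ρ, ρ', hρ, hρ', hne, rfl⟩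

lemma two_mul_CEmin_le {σ σ' : Matrix (Fin dA) (Fin dA) ℂ} (hσ : IsDensityMatrix σ)
    (hσ' : IsDensityMatrix σ') (hσσ' : σ * σ' = 0) : 2 * CEmin N ≤ traceNorm (N σ - N σ') := by
  have h := CEmin_le (N := N) hσ hσ' (hσ.ne_of_mul_eq_zero hσσ')
  rw [hσ.traceNorm_sub_of_mul_eq_zero hσ' hσσ'] at h
  linarith

lemma CEmin_le_one (hN : IsQuantumChannel N) {ρ ρ' : Matrix (Fin dA) (Fin dA) ℂ}
    (hρ : IsDensityMatrix ρ) (hρ' : IsDensityMatrix ρ') (hne : ρ ≠ ρ') : CEmin N ≤ 1 := by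
  refine (CEmin_le hρ hρ' hne).trans (div_le_one_of_le₀ ?_ (traceNorm_nonneg _))
  rw [← map_sub]
  exact hN.traceNorm_map_le (hρ.1.1.sub hρ'.1.1)

lemma CEmin_eq_zero_of_forall_eq
    (h : ∀ ρ ρ' : Matrix (Fin dA) (Fin dA) ℂ, IsDensityMatrix ρ → IsDensityMatrix ρ' → ρ = ρ') :
    CEmin N = 0 := by
  rw [CEmin, ← Real.sInf_empty]
  congr
  refine Set.eq_empty_of_forall_notMem ?_
  rintro _ ⟨ρ, ρ', hρ, hρ', hne, -⟩
  exact hne (h ρ ρ' hρ hρ')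

lemma DPmin_eq_zero_of_forall_eq
    (h : ∀ ρ ρ' : Matrix (Fin dA) (Fin dA) ℂ, IsDensityMatrix ρ → IsDensityMatrix ρ' → ρ = ρ') :
    DPmin N = 0 := by
  rw [DPmin, ← Real.sInf_empty]
  congr
  refine Set.eq_empty_of_forall_notMem ?_
  rintro _ ⟨p, -, -, ρ, ρ', hρ, hρ', hne, -⟩
  exact hne (h ρ ρ' hρ hρ')

end CausalEffect

theorem DPmin_ge_two_CEmin_sub_one_general {dA dB : ℕ}
    (N : Matrix (Fin dA) (Fin dA) ℂ →ₗ[ℂ] Matrix (Fin dB) (Fin dB) ℂ)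
    (hN : IsQuantumChannel N) :
    2 * CEmin N - 1 ≤ DPmin N := by
  by_cases hpair : ∃ ρ ρ' : Matrix (Fin dA) (Fin dA) ℂ,
    IsDensityMatrix ρ ∧ IsDensityMatrix ρ' ∧ ρ ≠ ρ'
  swap
  -- Without two distinct states both infima are `sInf ∅ = 0`.
  · push Not at hpair
    rw [CEmin_eq_zero_of_forall_eq hpair, DPmin_eq_zero_of_forall_eq hpair]
    norm_num
  obtain ⟨ρ₀, ρ₁, hρ₀, hρ₁, hne₀⟩ := hpair
  refine le_csInf ⟨_, 0, le_rfl, zero_le_one, ρ₀, ρ₁, hρ₀, hρ₁, hne₀, rfl⟩ ?_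
  rintro _ ⟨p, -, -, ρ, ρ', hρ, hρ', hne, rfl⟩
  have hX : ((p : ℂ) • ρ - ((1 - p : ℝ) : ℂ) • ρ').IsHermitian :=
    (hρ.1.1.smul (Complex.conj_ofReal p)).sub (hρ'.1.1.smul (Complex.conj_ofReal (1 - p)))
  rw [← map_smul, ← map_smul, ← map_sub,
    le_div_iff₀ (traceNorm_pos (hρ.smul_sub_smul_ne_zero hρ' hne p))]
  exact hN.two_mul_sub_one_mul_traceNorm_le (CEmin_le_one hN hρ₀ hρ₁ hne₀)
    (fun σ σ' hσ hσ' hσσ' ↦ two_mul_CEmin_le hσ hσ' hσσ') hX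

/-- **Lower bound on distinguishability preservation via the minimum causal effect.**
For every quantum channel `N : A → B` (`dA ≥ 2`), `DPmin N ≥ 2·CEmin N − 1`. -/
theorem DPmin_ge_two_CEmin_sub_one {dA dB : ℕ} (hdA : 2 ≤ dA)
    (N : Matrix (Fin dA) (Fin dA) ℂ →ₗ[ℂ] Matrix (Fin dB) (Fin dB) ℂ)
    (hN : IsQuantumChannel N) :
    2 * CEmin N - 1 ≤ DPmin N :=
  DPmin_ge_two_CEmin_sub_one_general N hN
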